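/- arXiv:1102.2473 — 7 statements merged into one kernel-verified Lean document; each statement's English description precedes it below -/
import Mathlib

section
/- Let P : F[x] → F[x] be a linear projector (P ∘ P = P) on the polynomial ring in d variables over a field F of characteristic zero. Then ker P is an ideal of F[x] if and only if P(f·g) = P(f·P(g)) for all polynomials f and g. -/
open MvPolynomial

/-- A linear projector `P` on `F[x₁,…,x_d]` has kernel an ideal iff
`P (f * g) = P (f * P g)` for all `f g`. -/
theorem stmt1 {F : Type*} [Field F] [CharZero F] {d : ℕ}
    (P : MvPolynomial (Fin d) F →ₗ[F] MvPolynomial (Fin d) F)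
    (hP : P ∘ₗ P = P) :
    (∃ I : Ideal (MvPolynomial (Fin d) F), ∀ f, f ∈ I ↔ P f = 0) ↔
      ∀ f g : MvPolynomial (Fin d) F, P (f * g) = P (f * P g) := by
  constructor
  · rintro ⟨I, hI⟩ f g
    have hker : P (g - P g) = 0 := by
      have := congrArg (fun Q => Q g) hP
      simp only [LinearMap.comp_apply] at this
      simp [map_sub, this]
    have hmem : f * (g - P g) ∈ I := I.mul_mem_left f ((hI _).2 hker)
    have h0 : P (f * (g - P g)) = 0 := (hI _).1 hmem
    rw [mul_sub, map_sub, sub_eq_zero] at h0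
    exact h0
  · intro h
    refine ⟨{ carrier := {f | P f = 0},
              add_mem' := fun ha hb => by simp_all [Set.mem_setOf_eq, map_add],
              zero_mem' := by simp,
              smul_mem' := fun c x hx => by
                simp only [Set.mem_setOf_eq, smul_eq_mul] at *
                rw [h c x, hx, mul_zero, map_zero] }, fun f => Iff.rfl⟩
end

section
/- Let P : F[x] → F[x] be a linear projector and set P' = id − P. Then ker P is an ideal if and only if P'(f·g) = f·P'(g) + P'(f·P(g)) for all polynomials f and g. -/
open MvPolynomial

/-- A linear projector `P` has kernel an ideal iff the complementary projector
`P' = I - P` satisfies `P'(f g) = f P'(g) + P'(f P(g))` for all `f, g`. -/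
theorem stmt2 {F : Type*} [Field F] [CharZero F] {d : ℕ}
    (P : MvPolynomial (Fin d) F →ₗ[F] MvPolynomial (Fin d) F)
    (hP : P ∘ₗ P = P)
    (P' : MvPolynomial (Fin d) F →ₗ[F] MvPolynomial (Fin d) F)
    (hP' : P' = LinearMap.id - P) :
    (∃ I : Ideal (MvPolynomial (Fin d) F), ∀ f, f ∈ I ↔ P f = 0) ↔
      ∀ f g : MvPolynomial (Fin d) F,
        P' (f * g) = f * P' g + P' (f * P g) := by
  subst hP'
  have hPP : ∀ x, P (P x) = P x := fun x => congrFun (congrArg DFunLike.coe hP) x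
  constructor
  · rintro ⟨I, hI⟩ f g
    have hmem : (g - P g) ∈ I := by
      rw [hI]; simp [map_sub, hPP]
    have h1 : P (f * (g - P g)) = 0 := by
      rw [← hI]; exact I.mul_mem_left f hmem
    rw [mul_sub, map_sub, sub_eq_zero] at h1
    simp only [LinearMap.sub_apply, LinearMap.id_apply]
    rw [h1]; ring
  · intro h
    have key : ∀ f g, P (f * g) = P (f * P g) := by
      intro f g
      have := h f g
      simp only [LinearMap.sub_apply, LinearMap.id_apply] at this
      linear_combination -this
    refine ⟨⟨⟨⟨{f | P f = 0}, ?_⟩, ?_⟩, ?_⟩, fun f => Iff.rfl⟩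
    · intro a b ha hb
      simp only [Set.mem_setOf_eq] at *
      rw [map_add, ha, hb, add_zero]
    · simp
    · intro c x hx
      simp only [Set.mem_setOf_eq, smul_eq_mul] at *
      rw [key, hx, mul_zero, map_zero]
end

section
/- Suppose the polynomials g₁,…,g_m, with g_j = x^{α^{(j)}} − Σ_{0 ≤ β < α^{(j)}} c_{j,β} x^β, form a reduced Gröbner basis of an ideal I ⊆ F[x₁,…,x_d] with respect to some monomial order. Then {g₁,…,g_m} is the reduced Gröbner basis of I with respect to every monomial order. -/
open MvPolynomial

/-- `g` has the form `x^α - ∑_{β < α} c_β x^β` with all `β` strictly below `α` componentwise. -/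
def HasLowerForm {F : Type*} [Field F] {d : ℕ} (g : MvPolynomial (Fin d) F)
    (α : Fin d →₀ ℕ) : Prop :=
  ∃ (s : Finset (Fin d →₀ ℕ)) (c : (Fin d →₀ ℕ) → F),
    (∀ β ∈ s, β ≤ α ∧ β ≠ α) ∧ g = monomial α 1 - ∑ β ∈ s, monomial β (c β)

/-- `δ` is the leading exponent (exponent of the leading monomial) of `p` w.r.t. `m`. -/
def IsLeadExp {F : Type*} [Field F] {d : ℕ} (m : MonomialOrder (Fin d))
    (p : MvPolynomial (Fin d) F) (δ : Fin d →₀ ℕ) : Prop :=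
  δ ∈ p.support ∧ ∀ β ∈ p.support, m.toSyn β ≤ m.toSyn δ

/-- `G` is a Gröbner basis of `I` w.r.t. the monomial order `m`. -/
def IsGB {F : Type*} [Field F] {d : ℕ} (m : MonomialOrder (Fin d))
    (I : Ideal (MvPolynomial (Fin d) F)) (G : Set (MvPolynomial (Fin d) F)) : Prop :=
  G ⊆ (I : Set (MvPolynomial (Fin d) F)) ∧
    ∀ p ∈ I, p ≠ 0 → ∃ g ∈ G, ∃ δg δp, IsLeadExp m g δg ∧ IsLeadExp m p δp ∧ δg ≤ δp

/-- `G` is a reduced Gröbner basis of `I` w.r.t. `m`: a Gröbner basis of monic elements,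
no term of any element being divisible by the leading monomial of another element. -/
def IsReducedGB {F : Type*} [Field F] {d : ℕ} (m : MonomialOrder (Fin d))
    (I : Ideal (MvPolynomial (Fin d) F)) (G : Set (MvPolynomial (Fin d) F)) : Prop :=
  IsGB m I G ∧ ∀ g ∈ G, ∃ δ, IsLeadExp m g δ ∧ coeff δ g = 1 ∧
    ∀ g' ∈ G, g' ≠ g → ∀ β ∈ g.support, ∀ δ', IsLeadExp m g' δ' → ¬ δ' ≤ β

/-- The Gröbner éscalier associated to a (reduced) Gröbner basis `G`:
exponents of the monomials not divisible by any leading monomial of `G`. -/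
def escalier {F : Type*} [Field F] {d : ℕ} (m : MonomialOrder (Fin d))
    (G : Set (MvPolynomial (Fin d) F)) : Set (Fin d →₀ ℕ) :=
  {β | ∀ g ∈ G, ∀ δ, IsLeadExp m g δ → ¬ δ ≤ β}

/-- `α! = α₁!⋯α_d!`. -/
def nfact {d : ℕ} (α : Fin d →₀ ℕ) : ℕ := α.prod fun _ k => k.factorial

/-- The differential operator `D^α = ∂^{α₁}/∂x₁^{α₁} ⋯ ∂^{α_d}/∂x_d^{α_d}`. -/
noncomputable def Dpow (F : Type*) [Field F] {d : ℕ} (α : Fin d →₀ ℕ) :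
    Module.End F (MvPolynomial (Fin d) F) :=
  (List.ofFn fun i : Fin d =>
    ((MvPolynomial.pderiv i).toLinearMap : Module.End F (MvPolynomial (Fin d) F)) ^ α i).prod

/-!
Every monomial order refines the componentwise order, so under every order `g j` has leading
exponent `α j`, and the reducedness condition does not depend on the order.

For the Gröbner property, reduce `p ∈ I` modulo the `g j` by well-founded induction on the
componentwise order: since the tail of `g j` lies strictly below `α j`, `p` is the sum of an
element of `⟨g⟩` and a polynomial `r` none of whose exponents is divisible by an `α j`, and the
reduction only changes coefficients lying below divisible exponents of `p`. Now `r ∈ I`, so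
`r = 0` because the `g j` form a Gröbner basis for `m₀`. Hence every exponent of `p` that no
`α j` divides lies strictly below one that some `α j` divides, so it is not the leading
exponent for any monomial order.
-/

section

variable {F : Type*} [Field F] {d : ℕ} {ι : Type*}

theorem HasLowerForm.le_of_mem_support {g : MvPolynomial (Fin d) F} {α : Fin d →₀ ℕ}
    (h : HasLowerForm g α) {β : Fin d →₀ ℕ} (hβ : β ∈ g.support) : β ≤ α := by
  classical
  obtain ⟨s, c, hs, rfl⟩ := h
  rcases Finset.mem_union.mp (support_sub _ _ _ hβ) with hβ | hβ
  · exact (Finset.mem_singleton.mp (support_monomial_subset hβ)).le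
  · obtain ⟨γ, hγ, hβγ⟩ := Finset.mem_biUnion.mp (support_sum hβ)
    rw [Finset.mem_singleton.mp (support_monomial_subset hβγ)]
    exact (hs γ hγ).1

theorem HasLowerForm.coeff_self {g : MvPolynomial (Fin d) F} {α : Fin d →₀ ℕ}
    (h : HasLowerForm g α) : coeff α g = 1 := by
  classical
  obtain ⟨s, c, hs, rfl⟩ := h
  rw [coeff_sub, coeff_monomial, if_pos rfl, coeff_sum, Finset.sum_eq_zero, sub_zero]
  intro β hβ
  rw [coeff_monomial, if_neg (hs β hβ).2]

theorem HasLowerForm.isLeadExp {g : MvPolynomial (Fin d) F} {α : Fin d →₀ ℕ}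
    (h : HasLowerForm g α) (m : MonomialOrder (Fin d)) : IsLeadExp m g α :=
  ⟨mem_support_iff.mpr (h.coeff_self ▸ one_ne_zero),
    fun _ hβ => m.toSyn_monotone (h.le_of_mem_support hβ)⟩

theorem IsLeadExp.eq {m : MonomialOrder (Fin d)} {p : MvPolynomial (Fin d) F}
    {δ δ' : Fin d →₀ ℕ} (h : IsLeadExp m p δ) (h' : IsLeadExp m p δ') : δ = δ' :=
  m.toSyn.injective (le_antisymm (h'.2 δ h.1) (h.2 δ' h'.1))

theorem exists_isLeadExp {m : MonomialOrder (Fin d)} {p : MvPolynomial (Fin d) F} (hp : p ≠ 0) :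
    ∃ δ, IsLeadExp m p δ :=
  p.support.exists_max_image m.toSyn (support_nonempty.mpr hp)

variable {g : ι → MvPolynomial (Fin d) F} {α : ι → Fin d →₀ ℕ}

theorem exists_monomial_sub_mem_span (hform : ∀ j, HasLowerForm (g j) (α j))
    (γ : Fin d →₀ ℕ) :
    ∃ r ∈ restrictSupport F {β | ∀ j, ¬ α j ≤ β},
      monomial γ 1 - r ∈ Ideal.span (Set.range g) ∧
      monomial γ 1 - r ∈ restrictSupport F {δ | (∃ j, α j ≤ γ) ∧ δ ≤ γ} := by
  classical
  induction γ using WellFoundedLT.induction with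
  | _ γ ih =>
  by_cases hγ : ∃ j, α j ≤ γ
  swap
  · push Not at hγ
    refine ⟨monomial γ 1, ?_, by simp, by simp⟩
    rw [mem_restrictSupport_iff]
    exact (Finset.coe_subset.mpr (support_monomial_subset)).trans (by simpa using hγ)
  obtain ⟨j, hj⟩ := hγ
  obtain ⟨s, c, hs, hg⟩ := hform j
  set ν := γ - α j
  have hνγ : ν + α j = γ := tsub_add_cancel_of_le hj
  have hlt : ∀ β ∈ s, ν + β < γ := fun β hβ =>
    hνγ ▸ add_lt_add_right (lt_of_le_of_ne (hs β hβ).1 (hs β hβ).2) ν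
  choose! R hR using fun β (hβ : β ∈ s) => ih (ν + β) (hlt β hβ)
  have hsplit : monomial γ 1 - ∑ β ∈ s, c β • R β
      = monomial ν 1 * g j + ∑ β ∈ s, c β • (monomial (ν + β) 1 - R β) := by
    simp only [hg, mul_sub, Finset.mul_sum, monomial_mul, one_mul, hνγ, smul_sub,
      Finset.sum_sub_distrib, smul_monomial, smul_eq_mul, mul_one]
    abel
  have hlead : monomial ν 1 * g j ∈ restrictSupport F {δ | (∃ j, α j ≤ γ) ∧ δ ≤ γ} := by
    rw [mem_restrictSupport_iff]
    intro δ hδ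
    rw [Finset.mem_coe, mem_support_iff, coeff_monomial_mul'] at hδ
    split_ifs at hδ
    · have := (hform j).le_of_mem_support (mem_support_iff.mpr (right_ne_zero_of_mul hδ))
      exact ⟨⟨j, hj⟩, hνγ ▸ tsub_le_iff_left.mp this⟩
    · exact (hδ rfl).elim
  refine ⟨∑ β ∈ s, c β • R β, Submodule.sum_mem _ fun β hβ => Submodule.smul_mem _ _ (hR β hβ).1,
    ?_, ?_⟩ <;> rw [hsplit]
  · exact add_mem (Ideal.mul_mem_left _ _ (Ideal.subset_span ⟨j, rfl⟩))
      (Submodule.sum_mem _ fun β hβ => Submodule.smul_of_tower_mem _ _ (hR β hβ).2.1)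
  · refine add_mem hlead (Submodule.sum_mem _ fun β hβ => Submodule.smul_mem _ _ ?_)
    refine restrictSupport_mono F ?_ (hR β hβ).2.2
    rintro δ ⟨-, hδ⟩
    exact ⟨⟨j, hj⟩, hδ.trans (hlt β hβ).le⟩

theorem exists_sub_mem_span (hform : ∀ j, HasLowerForm (g j) (α j))
    (p : MvPolynomial (Fin d) F) :
    ∃ r ∈ restrictSupport F {β | ∀ j, ¬ α j ≤ β},
      p - r ∈ Ideal.span (Set.range g) ∧
      p - r ∈ restrictSupport F {δ | ∃ γ ∈ p.support, (∃ j, α j ≤ γ) ∧ δ ≤ γ} := by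
  choose R hR using exists_monomial_sub_mem_span hform
  have hsplit : p - ∑ γ ∈ p.support, coeff γ p • R γ
      = ∑ γ ∈ p.support, coeff γ p • (monomial γ 1 - R γ) := by
    simp only [smul_sub, Finset.sum_sub_distrib, smul_monomial, smul_eq_mul, mul_one]
    rw [← p.as_sum]
  refine ⟨∑ γ ∈ p.support, coeff γ p • R γ,
    Submodule.sum_mem _ fun γ _ => Submodule.smul_mem _ _ (hR γ).1, ?_, ?_⟩ <;> rw [hsplit]
  · exact Submodule.sum_mem _ fun γ _ => Submodule.smul_of_tower_mem _ _ (hR γ).2.1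
  · refine Submodule.sum_mem _ fun γ hγ => Submodule.smul_mem _ _ ?_
    refine restrictSupport_mono F ?_ (hR γ).2.2
    rintro δ ⟨hγα, hδγ⟩
    exact ⟨γ, hγ, hγα, hδγ⟩

variable {m₀ : MonomialOrder (Fin d)} {I : Ideal (MvPolynomial (Fin d) F)}

theorem IsGB.exists_mem_support_le (hform : ∀ j, HasLowerForm (g j) (α j))
    (hGB : IsGB m₀ I (Set.range g)) {p : MvPolynomial (Fin d) F} (hp : p ∈ I) (hp0 : p ≠ 0) :
    ∃ β ∈ p.support, ∃ j, α j ≤ β := by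
  obtain ⟨_, ⟨j, rfl⟩, δg, δp, hδg, hδp, hle⟩ := hGB.2 p hp hp0
  exact ⟨δp, hδp.1, j, hδg.eq ((hform j).isLeadExp m₀) ▸ hle⟩

theorem IsGB.exists_le_mem_support (hform : ∀ j, HasLowerForm (g j) (α j))
    (hGB : IsGB m₀ I (Set.range g)) {p : MvPolynomial (Fin d) F} (hp : p ∈ I)
    {δ : Fin d →₀ ℕ} (hδ : δ ∈ p.support) :
    ∃ γ ∈ p.support, (∃ j, α j ≤ γ) ∧ δ ≤ γ := by
  obtain ⟨r, hr, hpr, hsupp⟩ := exists_sub_mem_span hform p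
  by_contra h
  have hcoeff : coeff δ (p - r) = 0 := notMem_support_iff.mp fun h' => h (hsupp h')
  have hrδ : coeff δ r ≠ 0 := by
    rw [coeff_sub, sub_eq_zero] at hcoeff
    exact hcoeff ▸ mem_support_iff.mp hδ
  have hrI : r ∈ I := by
    simpa using I.sub_mem hp (Ideal.span_le.mpr hGB.1 hpr)
  obtain ⟨β, hβ, j, hj⟩ := hGB.exists_mem_support_le hform hrI (ne_zero_iff.mpr ⟨δ, hrδ⟩)
  exact hr hβ j hj

theorem IsGB.exists_le_of_isLeadExp (hform : ∀ j, HasLowerForm (g j) (α j))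
    (hGB : IsGB m₀ I (Set.range g)) {m : MonomialOrder (Fin d)} {p : MvPolynomial (Fin d) F}
    (hp : p ∈ I) {δ : Fin d →₀ ℕ} (hδ : IsLeadExp m p δ) : ∃ j, α j ≤ δ := by
  by_contra h
  obtain ⟨γ, hγ, hγα, hδγ⟩ := hGB.exists_le_mem_support hform hp hδ.1
  have hne : δ ≠ γ := by
    rintro rfl
    exact h hγα
  exact (hδ.2 γ hγ).not_gt (m.toSyn_strictMono (lt_of_le_of_ne hδγ hne))

theorem IsGB.of_forall_hasLowerForm (hform : ∀ j, HasLowerForm (g j) (α j))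
    (hGB : IsGB m₀ I (Set.range g)) (m : MonomialOrder (Fin d)) : IsGB m I (Set.range g) := by
  refine ⟨hGB.1, fun p hp hp0 => ?_⟩
  obtain ⟨δ, hδ⟩ := exists_isLeadExp (m := m) hp0
  obtain ⟨j, hj⟩ := hGB.exists_le_of_isLeadExp hform hp hδ
  exact ⟨g j, ⟨j, rfl⟩, α j, δ, (hform j).isLeadExp m, hδ, hj⟩

theorem IsReducedGB.of_forall_hasLowerForm (hform : ∀ j, HasLowerForm (g j) (α j))
    (hGB : IsReducedGB m₀ I (Set.range g)) (m : MonomialOrder (Fin d)) :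
    IsReducedGB m I (Set.range g) := by
  refine ⟨hGB.1.of_forall_hasLowerForm hform m, ?_⟩
  rintro _ ⟨j, rfl⟩
  refine ⟨α j, (hform j).isLeadExp m, (hform j).coeff_self, ?_⟩
  rintro _ ⟨k, rfl⟩ hne β hβ δ hδ
  obtain ⟨-, -, -, hred⟩ := hGB.2 (g j) ⟨j, rfl⟩
  rw [hδ.eq ((hform k).isLeadExp m)]
  exact hred (g k) ⟨k, rfl⟩ hne β hβ (α k) ((hform k).isLeadExp m₀)

end

theorem stmt5_general {F : Type*} [Field F] {d M : ℕ}
    (I : Ideal (MvPolynomial (Fin d) F))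
    (g : Fin M → MvPolynomial (Fin d) F) (α : Fin M → (Fin d →₀ ℕ))
    (hform : ∀ j, HasLowerForm (g j) (α j))
    (m₀ : MonomialOrder (Fin d)) (hGB : IsReducedGB m₀ I (Set.range g)) :
    ∀ m : MonomialOrder (Fin d), IsReducedGB m I (Set.range g) :=
  hGB.of_forall_hasLowerForm hform

/-- If the `g_j = x^{α_j} - (lower order terms)` form a reduced Gröbner basis of `I`
w.r.t. some monomial order, then they form the reduced Gröbner basis of `I` w.r.t.
every monomial order (a universal reduced Gröbner basis). -/
theorem stmt5 {F : Type*} [Field F] [CharZero F] {d M : ℕ}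
    (I : Ideal (MvPolynomial (Fin d) F))
    (g : Fin M → MvPolynomial (Fin d) F) (α : Fin M → (Fin d →₀ ℕ))
    (hform : ∀ j, HasLowerForm (g j) (α j))
    (m₀ : MonomialOrder (Fin d)) (hGB : IsReducedGB m₀ I (Set.range g)) :
    ∀ m : MonomialOrder (Fin d), IsReducedGB m I (Set.range g) :=
  stmt5_general I g α hform m₀ hGB
end

section
/- Let P be an ideal projector on F[x₁,…,x_d] whose kernel has a Gröbner basis G = {g₁,…,g_m} with g_j = x^{α^{(j)}} − Σ_{0 ≤ β < α^{(j)}} c_{j,β} x^β, and whose range is the span of the monomials x^β not divisible by any x^{α^{(j)}}. Then for every exponent γ ∈ ℕ^d, the polynomial x^γ − P(x^γ) lies in the ideal generated by those g_j with α^{(j)} ≤ γ (componentwise). In particular there exist polynomials A_{γ,j} with x^γ − P(x^γ) = Σ_j A_{γ,j} g_j where A_{γ,j} = 0 whenever x^{α^{(j)}} does not divide x^γ. -/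
open MvPolynomial

/-!
Induct on `γ` along the componentwise order, which is well founded. If no `α j ≤ γ`,
then `x^γ` lies in the range of `P` and is fixed by it. Otherwise
`x^γ = x^(γ - α j) * g j + ∑ c_β x^β` with every `β < γ`: `P` kills the first summand, and by induction each `x^β - P x^β` lies in the
ideal of the `g i` with `α i ≤ β ≤ γ`.
-/

namespace HasLowerForm

variable {F : Type*} [Field F] {d : ℕ}

theorem monomial_mul {g : MvPolynomial (Fin d) F} {α : Fin d →₀ ℕ} (h : HasLowerForm g α)
    (μ : Fin d →₀ ℕ) : HasLowerForm (monomial μ 1 * g) (μ + α) := by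
  obtain ⟨s, c, hs, rfl⟩ := h
  refine ⟨s.image (μ + ·), fun δ => c (δ - μ), ?_, ?_⟩
  · simp only [Finset.mem_image]
    rintro _ ⟨β, hβ, rfl⟩
    exact ⟨add_le_add_right (hs β hβ).1 μ, fun h => (hs β hβ).2 (add_left_cancel h)⟩
  · rw [Finset.sum_image fun _ _ _ _ h => add_left_cancel h, mul_sub, Finset.mul_sum,
      MvPolynomial.monomial_mul, one_mul]
    simp only [MvPolynomial.monomial_mul, one_mul, add_tsub_cancel_left]

end HasLowerForm

theorem exists_sum_mul_eq_of_mem_span {R ι : Type*} [CommRing R] [Fintype ι]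
    {g : ι → R} {S : ι → Prop} {p : R} (hp : p ∈ Ideal.span {q | ∃ j, S j ∧ q = g j}) :
    ∃ A : ι → R, p = ∑ j, A j * g j ∧ ∀ j, ¬ S j → A j = 0 := by
  have hset : {q | ∃ j, S j ∧ q = g j} = g '' {j | S j} := by
    ext q; simp [eq_comm]
  rw [hset, Ideal.span, Finsupp.mem_span_image_iff_linearCombination] at hp
  obtain ⟨l, hl, rfl⟩ := hp
  refine ⟨l, by simp [Finsupp.linearCombination_apply, Finsupp.sum_fintype], fun j hj => ?_⟩
  exact Finsupp.notMem_support_iff.mp fun h => hj (hl h)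

theorem monomial_sub_apply_mem_span_of_hasLowerForm {F ι : Type*} [Field F] {d : ℕ}
    (P : MvPolynomial (Fin d) F →ₗ[F] MvPolynomial (Fin d) F)
    (I : Ideal (MvPolynomial (Fin d) F)) (hker : ∀ f ∈ I, P f = 0) {g : ι → MvPolynomial (Fin d) F} {α : ι → Fin d →₀ ℕ}
    (hform : ∀ j, HasLowerForm (g j) (α j)) (hgI : ∀ j, g j ∈ I)
    (hfix : ∀ β, (∀ j, ¬ α j ≤ β) → P (monomial β 1) = monomial β 1)
    (γ : Fin d →₀ ℕ) :
    monomial γ 1 - P (monomial γ 1) ∈ Ideal.span {p | ∃ j, α j ≤ γ ∧ p = g j} := by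
  induction γ using WellFoundedLT.induction with
  | _ γ ih =>
  by_cases hγ : ∀ j, ¬ α j ≤ γ
  · simp [hfix γ hγ]
  push Not at hγ
  obtain ⟨j, hj⟩ := hγ
  have hmul := (hform j).monomial_mul (γ - α j)
  rw [tsub_add_cancel_of_le hj] at hmul
  set f := monomial (γ - α j) (1 : F) * g j
  obtain ⟨s, c, hs, hf⟩ := hmul
  have hlower : ∀ β ∈ s, monomial β 1 - P (monomial β 1) ∈
      Ideal.span {p | ∃ j, α j ≤ γ ∧ p = g j} := fun β hβ =>
    Ideal.span_mono (by rintro _ ⟨i, hi, rfl⟩; exact ⟨i, hi.trans (hs β hβ).1, rfl⟩)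
      (ih β (lt_of_le_of_ne (hs β hβ).1 (hs β hβ).2))
  have hdecomp : monomial γ 1 - P (monomial γ 1) =
      f + ∑ β ∈ s, c β • (monomial β 1 - P (monomial β 1)) := by
    have hγf : monomial γ (1 : F) = f + ∑ β ∈ s, c β • monomial β 1 := by
      rw [hf]
      simp only [smul_monomial, smul_eq_mul, mul_one, sub_add_cancel]
    rw [hγf, map_add, hker f (I.mul_mem_left _ (hgI j)), map_sum]
    simp only [map_smul, smul_sub, Finset.sum_sub_distrib]
    abel
  rw [hdecomp]
  exact add_mem (Ideal.mul_mem_left _ _ (Ideal.subset_span ⟨j, hj, rfl⟩))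
    (sum_mem fun β hβ => Submodule.smul_of_tower_mem _ _ (hlower β hβ))

theorem stmt7_general {F : Type*} [Field F] {d M : ℕ}
    (P : MvPolynomial (Fin d) F →ₗ[F] MvPolynomial (Fin d) F) (hP : P ∘ₗ P = P)
    (I : Ideal (MvPolynomial (Fin d) F)) (hker : ∀ f, P f = 0 ↔ f ∈ I)
    (g : Fin M → MvPolynomial (Fin d) F) (α : Fin M → (Fin d →₀ ℕ))
    (hform : ∀ j, HasLowerForm (g j) (α j))
    (m₀ : MonomialOrder (Fin d)) (hGB : IsGB m₀ I (Set.range g))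
    (hran : LinearMap.range P =
      Submodule.span F ((fun β => monomial β (1 : F)) '' {β | ∀ j, ¬ α j ≤ β})) :
    ∀ γ : Fin d →₀ ℕ,
      monomial γ (1 : F) - P (monomial γ 1) ∈
        Ideal.span {p | ∃ j, α j ≤ γ ∧ p = g j} ∧
      ∃ A : Fin M → MvPolynomial (Fin d) F,
        monomial γ (1 : F) - P (monomial γ 1) = ∑ j, A j * g j ∧
          ∀ j, ¬ α j ≤ γ → A j = 0 := by
  intro γ
  have hfix : ∀ β, (∀ j, ¬ α j ≤ β) → P (monomial β 1) = monomial β 1 := fun β hβ =>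
    (LinearMap.IsIdempotentElem.mem_range_iff hP).mp
      (hran ▸ Submodule.subset_span ⟨β, hβ, rfl⟩)
  have hmem := monomial_sub_apply_mem_span_of_hasLowerForm P I (fun f => (hker f).mpr) hform
    (fun j => hGB.1 ⟨j, rfl⟩) hfix γ
  exact ⟨hmem, exists_sum_mul_eq_of_mem_span hmem⟩

/-- For an ideal projector `P` whose kernel has the Gröbner basis `{g_j}` with
`g_j = x^{α_j} - (lower terms)` and whose range is the span of the monomials not
divisible by any `x^{α_j}`: for every `γ`, `x^γ - P(x^γ)` lies in the ideal generated
by those `g_j` with `α_j ≤ γ`; in particular `x^γ - P(x^γ) = ∑ A_{γ,j} g_j` with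
`A_{γ,j} = 0` whenever `x^{α_j} ∤ x^γ`. -/
theorem stmt7 {F : Type*} [Field F] [CharZero F] {d M : ℕ}
    (P : MvPolynomial (Fin d) F →ₗ[F] MvPolynomial (Fin d) F) (hP : P ∘ₗ P = P)
    (I : Ideal (MvPolynomial (Fin d) F)) (hker : ∀ f, P f = 0 ↔ f ∈ I)
    (g : Fin M → MvPolynomial (Fin d) F) (α : Fin M → (Fin d →₀ ℕ))
    (hform : ∀ j, HasLowerForm (g j) (α j))
    (m₀ : MonomialOrder (Fin d)) (hGB : IsGB m₀ I (Set.range g))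
    (hran : LinearMap.range P =
      Submodule.span F ((fun β => monomial β (1 : F)) '' {β | ∀ j, ¬ α j ≤ β})) :
    ∀ γ : Fin d →₀ ℕ,
      monomial γ (1 : F) - P (monomial γ 1) ∈
        Ideal.span {p | ∃ j, α j ≤ γ ∧ p = g j} ∧
      ∃ A : Fin M → MvPolynomial (Fin d) F,
        monomial γ (1 : F) - P (monomial γ 1) = ∑ j, A j * g j ∧
          ∀ j, ¬ α j ≤ γ → A j = 0 :=
  stmt7_general P hP I hker g α hform m₀ hGB hran
end

section
/- Let Λ be a finite set of linear functionals on F[x₁,…,x_d] whose joint kernel ker Λ is a zero-dimensional ideal. If the Gröbner éscaliers of ker Λ with respect to all d cyclic lexicographic orders ≺_{lex(i)} (where x_i ≻ x_{i+1} ≻ ⋯ ≻ x_d ≻ x₁ ≻ ⋯ ≻ x_{i−1}) coincide, then the reduced Gröbner bases of ker Λ with respect to these d orders also coincide, and each element of this common basis has the form g_j = x^{α^{(j)}} − Σ_{0 ≤ β < α^{(j)}} c_{j,β} x^β with the sum over β strictly below α^{(j)} in the componentwise order. -/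
open MvPolynomial

/-- The cyclic lexicographic order `≺_{lex(i)}` with variable precedence
`x_i ≻ x_{i+1} ≻ ⋯ ≻ x_d ≻ x₁ ≻ ⋯ ≻ x_{i-1}`:
`β ≺_{lex(i)} α` iff at the first variable (in this cyclic order) where they differ,
the exponent of `β` is smaller. -/
def cycLexLt {d : ℕ} (i : Fin d) (β α : Fin d →₀ ℕ) : Prop :=
  ∃ k : Fin d, β (i + k) < α (i + k) ∧ ∀ l : Fin d, l < k → β (i + l) = α (i + l)

lemma leadExp_unique {F : Type*} [Field F] {d : ℕ} {m : MonomialOrder (Fin d)}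
    {p : MvPolynomial (Fin d) F} {δ δ' : Fin d →₀ ℕ}
    (h : IsLeadExp m p δ) (h' : IsLeadExp m p δ') : δ = δ' :=
  m.toSyn.injective (le_antisymm (h'.2 δ h.1) (h.2 δ' h'.1))

lemma cycLexLt_le {d : ℕ} {β α : Fin d →₀ ℕ} (h : ∀ i, cycLexLt i β α) : β ≤ α := by
  rw [Finsupp.le_def]
  intro c
  obtain ⟨d', rfl⟩ : ∃ d', d = d' + 1 := ⟨d - 1, by have := c.pos; omega⟩
  obtain ⟨k, hk, hl⟩ := h c
  rcases eq_or_ne k 0 with rfl | hne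
  · simpa using hk.le
  · have := hl 0 (Fin.pos_of_ne_zero hne)
    simpa using this.le

/-- If the Gröbner éscaliers of the zero-dimensional ideal `ker Λ` w.r.t. all `d` cyclic
lexicographic orders coincide, then the reduced Gröbner bases w.r.t. these orders coincide,
and every element of this common basis has the form `x^{α_j} - (lower terms)`. -/
theorem stmt10 {F : Type*} [Field F] [CharZero F] {d n : ℕ}
    (Λ : Fin n → (MvPolynomial (Fin d) F →ₗ[F] F))
    (I : Ideal (MvPolynomial (Fin d) F)) (hI : ∀ f, f ∈ I ↔ ∀ k, Λ k f = 0)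
    (hzerodim : FiniteDimensional F (MvPolynomial (Fin d) F ⧸ I))
    (ord : Fin d → MonomialOrder (Fin d))
    (hord : ∀ (i : Fin d) (a b : Fin d →₀ ℕ),
      (ord i).toSyn a < (ord i).toSyn b ↔ cycLexLt i a b)
    (G : Fin d → Set (MvPolynomial (Fin d) F))
    (hG : ∀ i, IsReducedGB (ord i) I (G i))
    (hesc : ∀ i j, escalier (ord i) (G i) = escalier (ord j) (G j)) :
    (∀ i j, G i = G j) ∧
    ∀ i, ∀ g ∈ G i, ∃ α : Fin d →₀ ℕ, HasLowerForm g α := by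
  classical
  -- non-leading exponents of a reduced-GB element lie in the escalier
  have h1 : ∀ i, ∀ g ∈ G i, ∀ δ, IsLeadExp (ord i) g δ → ∀ β ∈ g.support, β ≠ δ →
      β ∈ escalier (ord i) (G i) := by
    intro i g hg δ hδ β hβ hne g'' hg'' δ'' hδ''
    by_cases hgg : g'' = g
    · subst hgg
      obtain ⟨δ₀, hδ₀, _, _⟩ := (hG i).2 g'' hg
      have e1 : δ₀ = δ := leadExp_unique hδ₀ hδ
      have e2 : δ₀ = δ'' := leadExp_unique hδ₀ hδ''
      intro hle
      have h3 := (ord i).toSyn_monotone hle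
      have h4 := hδ.2 β hβ
      exact hne ((ord i).toSyn.injective (le_antisymm h4 (e1 ▸ e2 ▸ h3)))
    · obtain ⟨δ₀, hδ₀, _, hredg⟩ := (hG i).2 g hg
      exact hredg g'' hg'' hgg β hβ δ'' hδ''
  -- an element of I supported in the escalier is zero
  have h2 : ∀ i, ∀ p ∈ I, (∀ β ∈ p.support, β ∈ escalier (ord i) (G i)) → p = 0 := by
    intro i p hp hsupp
    by_contra hp0
    obtain ⟨g, hg, δg, δp, hlg, hlp, hle⟩ := (hG i).1.2 p hp hp0
    exact hsupp δp hlp.1 g hg δg hlg hle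
  -- a leading exponent is not in the escalier
  have h3 : ∀ i, ∀ g ∈ G i, ∀ δ, IsLeadExp (ord i) g δ →
      δ ∉ escalier (ord i) (G i) := fun i g hg δ hδ hmem => hmem g hg δ hδ le_rfl
  -- a leading exponent is minimal outside the escalier
  have h4 : ∀ i, ∀ g ∈ G i, ∀ δ, IsLeadExp (ord i) g δ →
      ∀ γ, γ ∉ escalier (ord i) (G i) → γ ≤ δ → γ = δ := by
    intro i g hg δ hδ γ hγ hle
    simp only [escalier, Set.mem_setOf_eq] at hγ
    push_neg at hγ
    obtain ⟨g'', hg'', δ'', hδ'', hle''⟩ := hγ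
    by_cases hgg : g'' = g
    · subst hgg
      have e1 : δ'' = δ := leadExp_unique hδ'' hδ
      exact le_antisymm hle (e1 ▸ hle'')
    · obtain ⟨δ₀, hδ₀, _, hredg⟩ := (hG i).2 g hg
      exact absurd (hle''.trans hle) (hredg g'' hg'' hgg δ hδ.1 δ'' hδ'')
  -- the bases are pairwise contained in each other
  have hsub : ∀ i j, G i ⊆ G j := by
    intro i j g hg
    obtain ⟨δ, hδ, hmonic, _⟩ := (hG i).2 g hg
    have hδnotE : δ ∉ escalier (ord j) (G j) := (hesc i j) ▸ h3 i g hg δ hδ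
    simp only [escalier, Set.mem_setOf_eq] at hδnotE
    push_neg at hδnotE
    obtain ⟨g', hg', δ', hδ', hle'⟩ := hδnotE
    have hδ'notE : δ' ∉ escalier (ord i) (G i) := (hesc j i) ▸ h3 j g' hg' δ' hδ'
    have heq : δ' = δ := h4 i g hg δ hδ δ' hδ'notE hle'
    subst heq
    obtain ⟨δ₂, hδ₂, hmonic', _⟩ := (hG j).2 g' hg'
    have heq₂ : δ₂ = δ' := leadExp_unique hδ₂ hδ'
    subst heq₂
    have hpI : g - g' ∈ I := sub_mem ((hG i).1.1 hg) ((hG j).1.1 hg')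
    have hzero : g - g' = 0 := by
      apply h2 i _ hpI
      intro β hβ
      have hβne : β ≠ δ₂ := by
        intro h
        subst h
        simp [MvPolynomial.coeff_sub, hmonic, hmonic',
          MvPolynomial.mem_support_iff] at hβ
      have : β ∈ g.support ∪ g'.support := by
        have := MvPolynomial.support_add (p := g) (q := -g') (σ := Fin d)
        rw [← sub_eq_add_neg, MvPolynomial.support_neg] at this
        exact this hβ
      rcases Finset.mem_union.1 this with hb | hb
      · exact h1 i g hg δ₂ hδ β hb hβne
      · exact (hesc j i) ▸ h1 j g' hg' δ₂ hδ' β hb hβne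
    have : g = g' := sub_eq_zero.1 hzero
    exact this ▸ hg'
  refine ⟨fun i j => le_antisymm (hsub i j) (hsub j i), ?_⟩
  intro i g hg
  obtain ⟨δ, hδ, hmonic, _⟩ := (hG i).2 g hg
  refine ⟨δ, g.support.erase δ, fun β => -MvPolynomial.coeff β g, ?_, ?_⟩
  · intro β hβ
    have hβs := Finset.mem_of_mem_erase hβ
    have hβne := Finset.ne_of_mem_erase hβ
    refine ⟨?_, hβne⟩
    apply cycLexLt_le
    intro j
    rw [← hord j]
    have hgj : g ∈ G j := hsub i j hg
    obtain ⟨δj, hδj, _, _⟩ := (hG j).2 g hgj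
    have hδjδ : δj = δ := by
      by_contra hne'
      exact (h3 j g hgj δj hδj)
        ((hesc i j) ▸ h1 i g hg δ hδ δj hδj.1 hne')
    subst hδjδ
    exact lt_of_le_of_ne (hδj.2 β hβs) (fun h => hβne ((ord j).toSyn.injective h))
  · have : g = ∑ v ∈ g.support, monomial v (MvPolynomial.coeff v g) :=
      MvPolynomial.as_sum g
    rw [show (monomial δ) (1:F) = monomial δ (MvPolynomial.coeff δ g) by rw [hmonic]]
    conv_lhs => rw [this, ← Finset.add_sum_erase _ _ hδ.1]
    simp only [map_neg, Finset.sum_neg_distrib, sub_neg_eq_add]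
end

section
/- In the setting of the previous statement, let r be the maximal total degree of monomials in O and let Λ = (ker P)^⊥ be the n-dimensional space of interpolation conditions (n = #O = dim V). Then there is no n-dimensional subspace V' of Π_{r−1} (polynomials of total degree ≤ r−1) for which the interpolation problem with conditions Λ is poised, i.e., for which Π_{r−1} ⊇ V' satisfies V' ∩ ker Λ = {0} and dim V' = n. Hence V is a minimal degree interpolation space for Λ. -/
/-! Since `V' ∩ ker P = 0` and `dim V' = n = dim V`, `P` maps `V'` onto `V`, so some `v ∈ V'`
has `P v = x^β` for a standard monomial `x^β` of degree `r`, and `x^β - v ∈ ker P` has `x^β` as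
its only term of degree `≥ r`. The leading term of a nonzero element of `ker P` is divisible by
some `x^{α_j}`, so it is never the standard `x^β` and has degree `< r`; as every monomial of `g_j`
divides `x^{α_j}`, cancelling it with a multiple of `g_j` only subtracts terms of degree `< r`.
This reduction ends at `0` without ever changing the coefficient of `x^β`, which is therefore
`0`, not `1`. -/

open MvPolynomial

open MonomialOrder Module

theorem Submodule.map_eq_range_of_disjoint_ker {K V W : Type*} [DivisionRing K]
    [AddCommGroup V] [Module K V] [AddCommGroup W] [Module K W] (f : V →ₗ[K] W)
    [FiniteDimensional K (LinearMap.range f)] {p : Submodule K V}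
    (hp : Disjoint p (LinearMap.ker f)) (hrank : finrank K p = finrank K (LinearMap.range f)) :
    p.map f = LinearMap.range f := by
  have hinj : Function.Injective (f.domRestrict p) := LinearMap.injective_domRestrict_iff.mpr hp
  refine Submodule.eq_of_le_of_finrank_le (LinearMap.map_le_range) ?_
  rw [← hrank, ← LinearMap.finrank_range_of_inj hinj, LinearMap.range_domRestrict]

namespace HasLowerForm

variable {F : Type*} [Field F] {d : ℕ} {g : MvPolynomial (Fin d) F} {α : Fin d →₀ ℕ}

theorem coeff_eq_one (h : HasLowerForm g α) : coeff α g = 1 := by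
  obtain ⟨s, c, hs, rfl⟩ := h
  have hαs : α ∉ s := fun hα => (hs α hα).2 rfl
  simp [coeff_sum, coeff_monomial, hαs]

theorem le_of_mem_support_s13 (h : HasLowerForm g α) {β : Fin d →₀ ℕ} (hβ : β ∈ g.support) :
    β ≤ α := by
  obtain ⟨s, c, hs, rfl⟩ := h
  by_contra hβα
  have hβs : β ∉ s := fun hβs => hβα (hs β hβs).1
  have hne : α ≠ β := by rintro rfl; exact hβα le_rfl
  simp [coeff_sum, coeff_monomial, hβs, hne] at hβ

theorem degree_eq (h : HasLowerForm g α) (m : MonomialOrder (Fin d)) : m.degree g = α := by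
  have hα : α ∈ g.support := by simp [h.coeff_eq_one]
  have hg : g ≠ 0 := by rintro rfl; simp at hα
  exact m.toSyn.injective <| le_antisymm
    (m.toSyn_monotone (h.le_of_mem_support_s13 (m.degree_mem_support hg))) (m.le_degree hα)

theorem leadingCoeff_eq_one (h : HasLowerForm g α) (m : MonomialOrder (Fin d)) :
    m.leadingCoeff g = 1 := by
  rw [leadingCoeff, h.degree_eq, h.coeff_eq_one]

theorem monomial_mul_mem_restrictSupport (h : HasLowerForm g α) {S : Set (Fin d →₀ ℕ)}
    (hS : IsLowerSet S) {δ : Fin d →₀ ℕ} (hαδ : α ≤ δ) (hδ : δ ∈ S) (c : F) :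
    monomial (δ - α) c * g ∈ restrictSupport F S := by
  classical
  intro γ hγ
  obtain ⟨a, ha, b, hb, rfl⟩ := Finset.mem_add.mp (support_mul _ _ hγ)
  rw [Finset.mem_singleton.mp (support_monomial_subset ha)] at *
  refine hS ?_ hδ
  calc δ - α + b ≤ δ - α + α := add_le_add_right (h.le_of_mem_support_s13 hb) _
    _ = δ := tsub_add_cancel_of_le hαδ

end HasLowerForm

theorem IsLeadExp.degree_eq {F : Type*} [Field F] {d : ℕ} {m : MonomialOrder (Fin d)}
    {p : MvPolynomial (Fin d) F} {δ : Fin d →₀ ℕ} (h : IsLeadExp m p δ) : m.degree p = δ :=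
  m.toSyn.injective <| le_antisymm
    (h.2 _ (m.degree_mem_support (support_nonempty.mp ⟨δ, h.1⟩))) (m.le_degree h.1)

section Reduction

variable {F : Type*} [Field F] {d M : ℕ} {m : MonomialOrder (Fin d)}
  {I : Ideal (MvPolynomial (Fin d) F)} {g : Fin M → MvPolynomial (Fin d) F}
  {α : Fin M → (Fin d →₀ ℕ)}

theorem IsGB.exists_le_degree (hGB : IsGB m I (Set.range g))
    (hform : ∀ j, HasLowerForm (g j) (α j)) {q : MvPolynomial (Fin d) F} (hq : q ∈ I)
    (hq0 : q ≠ 0) : ∃ j, α j ≤ m.degree q := by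
  obtain ⟨_, ⟨j, rfl⟩, δg, δq, hg, hq, hle⟩ := hGB.2 q hq hq0
  exact ⟨j, by rwa [← (hform j).degree_eq m, hg.degree_eq, hq.degree_eq]⟩

theorem coeff_eq_zero_of_mem_restrictSupport_insert (hGB : IsGB m I (Set.range g))
    (hform : ∀ j, HasLowerForm (g j) (α j)) {S : Set (Fin d →₀ ℕ)} (hS : IsLowerSet S)
    {β : Fin d →₀ ℕ} (hβ : ∀ j, ¬ α j ≤ β) (hβS : β ∉ S) {q : MvPolynomial (Fin d) F}
    (hqI : q ∈ I) (hqS : q ∈ restrictSupport F (insert β S)) : coeff β q = 0 := by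
  induction hδ : m.toSyn (m.degree q) using WellFoundedLT.induction generalizing q with
  | ind t ih =>
  subst hδ
  by_cases hq0 : q = 0
  · simp [hq0]
  obtain ⟨j, hj⟩ := hGB.exists_le_degree hform hqI hq0
  have hδβ : m.degree q ≠ β := fun h => hβ j (h ▸ hj)
  have hδS : m.degree q ∈ S := (hqS (m.degree_mem_support hq0)).resolve_left hδβ
  by_cases hδ0 : m.degree q = 0
  · rw [m.eq_C_of_degree_eq_zero hδ0, coeff_C, if_neg (fun h => hδβ (hδ0.trans h))]
  have hb : IsUnit (m.leadingCoeff (g j)) := by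
    rw [(hform j).leadingCoeff_eq_one]; exact isUnit_one
  have hlower : monomial (m.degree q - m.degree (g j)) (hb.unit⁻¹ * m.leadingCoeff q) * g j ∈
      restrictSupport F S := by
    rw [(hform j).degree_eq]
    exact (hform j).monomial_mul_mem_restrictSupport hS hj hδS _
  have hcoeff : coeff β (m.reduce hb q) = coeff β q := by
    have : coeff β (monomial (m.degree q - m.degree (g j)) (hb.unit⁻¹ * m.leadingCoeff q) *
        g j) = 0 := notMem_support_iff.mp fun h => hβS (hlower h)
    rw [reduce, coeff_sub, this, sub_zero]
  rw [← hcoeff]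
  refine ih _ ?_ (I.sub_mem hqI (I.mul_mem_left _ (hGB.1 ⟨j, rfl⟩)))
    (sub_mem hqS (restrictSupport_mono F (Set.subset_insert β S) hlower)) rfl
  exact m.degree_reduce_lt hb (by rw [(hform j).degree_eq]; exact hj) hδ0

end Reduction

theorem finrank_span_monomial {F : Type*} [Field F] {σ : Type*} {s : Set (σ →₀ ℕ)}
    (hs : s.Finite) :
    finrank F (Submodule.span F ((fun β => monomial β (1 : F)) '' s)) = hs.toFinset.card := by
  rw [← restrictSupport_eq_span, finrank_eq_nat_card_basis (basisRestrictSupport F s),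
    Nat.card_coe_set_eq, Set.ncard_eq_toFinset_card s hs]

theorem stmt13_general {F : Type*} [Field F] {d M : ℕ}
    (P : MvPolynomial (Fin d) F →ₗ[F] MvPolynomial (Fin d) F) (hP : P ∘ₗ P = P)
    (I : Ideal (MvPolynomial (Fin d) F)) (hker : ∀ f, P f = 0 ↔ f ∈ I)
    (g : Fin M → MvPolynomial (Fin d) F) (α : Fin M → (Fin d →₀ ℕ))
    (hform : ∀ j, HasLowerForm (g j) (α j))
    (m₀ : MonomialOrder (Fin d)) (hGB : IsReducedGB m₀ I (Set.range g))
    (O : Set (Fin d →₀ ℕ)) (hO : O = {β | ∀ j, ¬ α j ≤ β})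
    (hran : LinearMap.range P =
      Submodule.span F ((fun β => monomial β (1 : F)) '' O))
    (hOfin : O.Finite) (n : ℕ) (hn : n = hOfin.toFinset.card)
    (r : ℕ)
    (hrmax : ∃ β ∈ O, (β.sum fun _ k => k) = r) :
    ¬ ∃ V' : Submodule F (MvPolynomial (Fin d) F),
        (∀ f ∈ V', f ≠ 0 → f.totalDegree < r) ∧
        Module.finrank F V' = n ∧
        V' ⊓ LinearMap.ker P = ⊥ := by
  rintro ⟨V', hdeg, hrank, hdisj⟩
  obtain ⟨β, hβO, hβr⟩ := hrmax
  have hβ : ∀ j, ¬ α j ≤ β := by rwa [hO] at hβO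
  have : FiniteDimensional F (LinearMap.range P) := by
    rw [hran]; exact FiniteDimensional.span_of_finite F (hOfin.image _)
  have hmap : V'.map P = LinearMap.range P :=
    Submodule.map_eq_range_of_disjoint_ker P (disjoint_iff.mpr hdisj)
      (by rw [hrank, hran, finrank_span_monomial hOfin, hn])
  obtain ⟨v, hv, hPv⟩ : monomial β (1 : F) ∈ V'.map P :=
    hmap ▸ hran ▸ Submodule.subset_span ⟨β, hβO, rfl⟩
  set S : Set (Fin d →₀ ℕ) := {γ | γ.degree < r}
  have hβS : β ∉ S := fun h => h.ne hβr
  have hvS : v ∈ restrictSupport F S := by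
    have hv0 : v ≠ 0 := by
      rintro rfl
      exact one_ne_zero (monomial_eq_zero.mp (hPv.symm.trans (map_zero P)))
    exact fun γ hγ => (le_totalDegree hγ).trans_lt (hdeg v hv hv0)
  have hqI : monomial β 1 - v ∈ I := by
    rw [← hker, map_sub, ← hPv, ← LinearMap.comp_apply, hP, sub_self]
  have hqS : monomial β 1 - v ∈ restrictSupport F (insert β S) :=
    sub_mem ((monomial_mem_restrictSupport F).mpr (.inl (Set.mem_insert β S)))
      (restrictSupport_mono F (Set.subset_insert β S) hvS)
  have hcoeff := coeff_eq_zero_of_mem_restrictSupport_insert hGB.1 hform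
    (fun _ _ hle hlt => (Finsupp.degree_mono hle).trans_lt hlt) hβ hβS hqI hqS
  have hvβ : coeff β v = 0 := notMem_support_iff.mp fun h => hβS (hvS h)
  rw [coeff_sub, coeff_monomial, if_pos rfl, hvβ, sub_zero] at hcoeff
  exact one_ne_zero hcoeff

/-- Minimal degree: with `O` the order ideal of standard monomials, `r` the maximal total
degree in `O` and `n = #O`, there is no `n`-dimensional subspace `V'` of `Π_{r-1}` with
`V' ∩ ker Λ = {0}` (where `ker Λ = ker P`); i.e. no interpolation space of smaller degree
is poised for the interpolation conditions `Λ = (ker P)^⊥`. -/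
theorem stmt13 {F : Type*} [Field F] [CharZero F] {d M : ℕ}
    (P : MvPolynomial (Fin d) F →ₗ[F] MvPolynomial (Fin d) F) (hP : P ∘ₗ P = P)
    (I : Ideal (MvPolynomial (Fin d) F)) (hker : ∀ f, P f = 0 ↔ f ∈ I)
    (g : Fin M → MvPolynomial (Fin d) F) (α : Fin M → (Fin d →₀ ℕ))
    (hform : ∀ j, HasLowerForm (g j) (α j))
    (m₀ : MonomialOrder (Fin d)) (hGB : IsReducedGB m₀ I (Set.range g))
    (O : Set (Fin d →₀ ℕ)) (hO : O = {β | ∀ j, ¬ α j ≤ β})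
    (hran : LinearMap.range P =
      Submodule.span F ((fun β => monomial β (1 : F)) '' O))
    (hOfin : O.Finite) (n : ℕ) (hn : n = hOfin.toFinset.card)
    (r : ℕ) (hr : ∀ β ∈ O, (β.sum fun _ k => k) ≤ r)
    (hrmax : ∃ β ∈ O, (β.sum fun _ k => k) = r) :
    ¬ ∃ V' : Submodule F (MvPolynomial (Fin d) F),
        (∀ f ∈ V', f ≠ 0 → f.totalDegree < r) ∧
        Module.finrank F V' = n ∧
        V' ⊓ LinearMap.ker P = ⊥ :=
  stmt13_general P hP I hker g α hform m₀ hGB O hO hran hOfin n hn r hrmax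
end

section
/- Let P be the Lagrange projector at the points {(0,0,0), (0,1,0), (0,0,1), (1,0,1)} in F³ onto V = span{1, x₁, x₂, x₃}. Then the ideal of polynomials vanishing at these four points is generated by {x₁x₂, x₂x₃, x₁² − x₁, x₂² − x₂, x₃² − x₃, x₁x₃ − x₁}, and each generator has the form x^α − Σ_{β < α} c_β x^β with β < α in the componentwise order. -/
/-!
Let `I` be the ideal generated by the six polynomials and `V` the span of `1, x₁, x₂, x₃`.
Modulo `I` every product `xᵢxⱼ` is `0` or a single variable, so `V + I` is closed under
multiplication by the variables and is therefore the whole polynomial ring. The four points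
are unisolvent for `V`, i.e. `V` meets the vanishing ideal `J` only in `0`; since `I ≤ J`, the
modular law gives `J = J ∩ (V + I) = (J ∩ V) + I = I`.
Each generator is a monomial minus at most one monomial properly dividing it.
-/

open MvPolynomial

theorem Ideal.eq_of_disjoint_of_sup_eq_top {F A : Type*} [Field F] [CommRing A] [Algebra F A]
    {V : Submodule F A} {I J : Ideal A} (hIJ : I ≤ J)
    (hVJ : Disjoint V (J.restrictScalars F)) (hVI : V ⊔ I.restrictScalars F = ⊤) :
    I = J := by
  refine Submodule.restrictScalars_injective F _ _
    (eq_of_le_of_inf_le_of_sup_le (z := V) hIJ ?_ ?_)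
  · rw [inf_comm, hVJ.eq_bot]
    exact bot_le
  · simp only [sup_comm _ V, hVI, le_top]

namespace MvPolynomial

variable {σ F : Type*} [Field F]

theorem span_sup_restrictScalars_eq_top {s : Set (MvPolynomial σ F)}
    {I : Ideal (MvPolynomial σ F)} (h1 : 1 ∈ Submodule.span F s)
    (hX : ∀ b ∈ s, ∀ i, b * X i ∈ Submodule.span F s ⊔ I.restrictScalars F) :
    Submodule.span F s ⊔ I.restrictScalars F = ⊤ := by
  set W := Submodule.span F s ⊔ I.restrictScalars F
  have hspan_mul (i : σ) {v : MvPolynomial σ F} (hv : v ∈ Submodule.span F s) :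
      v * X i ∈ W := by
    induction hv using Submodule.span_induction with
    | mem b hb => exact hX b hb i
    | zero => simp
    | add u v _ _ hu hv => simpa only [add_mul] using W.add_mem hu hv
    | smul a v _ hv => simpa only [smul_mul_assoc] using W.smul_mem a hv
  suffices ∀ f, f ∈ W from eq_top_iff.mpr fun f _ => this f
  intro f
  induction f using MvPolynomial.induction_on with
  | C a => simpa [C_eq_smul_one] using W.smul_mem a (Submodule.mem_sup_left h1)
  | add p q hp hq => exact W.add_mem hp hq
  | mul_X p i hp =>
    obtain ⟨v, hv, j, hj, rfl⟩ := Submodule.mem_sup.mp hp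
    rw [add_mul]
    exact W.add_mem (hspan_mul i hv)
      (Submodule.mem_sup_right (I.mul_mem_right (X i) hj))

variable (σ F)

noncomputable def affinePolynomials : Submodule F (MvPolynomial σ F) :=
  Submodule.span F (insert 1 (Set.range X))

end MvPolynomial

section Example

variable (F : Type*) [Field F]

noncomputable def exampleNodes : Fin 4 → Fin 3 → F :=
  ![![0, 0, 0], ![0, 1, 0], ![0, 0, 1], ![1, 0, 1]]

noncomputable def exampleGens : Set (MvPolynomial (Fin 3) F) :=
  {X 0 * X 1, X 1 * X 2, X 0 ^ 2 - X 0, X 1 ^ 2 - X 1, X 2 ^ 2 - X 2, X 0 * X 2 - X 0}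

theorem span_exampleGens_le_vanishingIdeal :
    Ideal.span (exampleGens F) ≤ vanishingIdeal F (Set.range (exampleNodes F)) := by
  rw [Ideal.span_le]
  rintro g hg _ ⟨k, rfl⟩
  simp only [exampleGens, Set.mem_insert_iff, Set.mem_singleton_iff] at hg
  rcases hg with rfl | rfl | rfl | rfl | rfl | rfl <;> fin_cases k <;> simp [exampleNodes]

theorem disjoint_affinePolynomials_vanishingIdeal :
    Disjoint (affinePolynomials (Fin 3) F)
      ((vanishingIdeal F (Set.range (exampleNodes F))).restrictScalars F) := by
  rw [Submodule.disjoint_def]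
  intro v hv hvan
  obtain ⟨a, w, hw, rfl⟩ := Submodule.mem_span_insert.mp hv
  obtain ⟨c, rfl⟩ := (Submodule.mem_span_range_iff_exists_fun F).mp hw
  have hval (k : Fin 4) := hvan _ ⟨k, rfl⟩
  have h0 := hval 0
  have h1 := hval 1
  have h2 := hval 2
  have h3 := hval 3
  simp only [exampleNodes, map_add, map_smul, map_one, aeval_X, Fin.sum_univ_three,
    Matrix.cons_val, smul_eq_mul] at h0 h1 h2 h3
  obtain rfl : a = 0 := by linear_combination h0
  have hc0 : c 0 = 0 := by linear_combination h3 - h2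
  have hc1 : c 1 = 0 := by linear_combination h1
  have hc2 : c 2 = 0 := by linear_combination h2
  simp [Fin.sum_univ_three, hc0, hc1, hc2]

theorem X_mul_X_mem_affinePolynomials_sup (i j : Fin 3) :
    X i * X j ∈ affinePolynomials (Fin 3) F ⊔ (Ideal.span (exampleGens F)).restrictScalars F := by
  have reduce {p : MvPolynomial (Fin 3) F} (v g : MvPolynomial (Fin 3) F)
      (hv : v ∈ affinePolynomials (Fin 3) F) (hg : g ∈ exampleGens F) (hp : p = v + g) :
      p ∈ affinePolynomials (Fin 3) F ⊔ (Ideal.span (exampleGens F)).restrictScalars F :=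
    Submodule.mem_sup.mpr ⟨v, hv, g, Ideal.subset_span hg, hp.symm⟩
  have hX (k : Fin 3) : X k ∈ affinePolynomials (Fin 3) F :=
    Submodule.subset_span (Set.mem_insert_of_mem _ ⟨k, rfl⟩)
  fin_cases i <;> fin_cases j <;> simp only [Fin.reduceFinMk, Fin.isValue]
  · exact reduce (X 0) (X 0 ^ 2 - X 0) (hX 0) (by simp [exampleGens]) (by ring)
  · exact reduce 0 (X 0 * X 1) (zero_mem _) (by simp [exampleGens]) (by ring)
  · exact reduce (X 0) (X 0 * X 2 - X 0) (hX 0) (by simp [exampleGens]) (by ring)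
  · exact reduce 0 (X 0 * X 1) (zero_mem _) (by simp [exampleGens]) (by ring)
  · exact reduce (X 1) (X 1 ^ 2 - X 1) (hX 1) (by simp [exampleGens]) (by ring)
  · exact reduce 0 (X 1 * X 2) (zero_mem _) (by simp [exampleGens]) (by ring)
  · exact reduce (X 0) (X 0 * X 2 - X 0) (hX 0) (by simp [exampleGens]) (by ring)
  · exact reduce 0 (X 1 * X 2) (zero_mem _) (by simp [exampleGens]) (by ring)
  · exact reduce (X 2) (X 2 ^ 2 - X 2) (hX 2) (by simp [exampleGens]) (by ring)

theorem span_exampleGens_eq_vanishingIdeal :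
    Ideal.span (exampleGens F) = vanishingIdeal F (Set.range (exampleNodes F)) := by
  refine Ideal.eq_of_disjoint_of_sup_eq_top (span_exampleGens_le_vanishingIdeal F)
    (disjoint_affinePolynomials_vanishingIdeal F)
    (span_sup_restrictScalars_eq_top (Submodule.subset_span (Set.mem_insert _ _)) ?_)
  rintro b (rfl | ⟨j, rfl⟩) i
  · rw [one_mul]
    exact Submodule.mem_sup_left (Submodule.subset_span (Set.mem_insert_of_mem _ ⟨i, rfl⟩))
  · exact X_mul_X_mem_affinePolynomials_sup F j i

end Example

section LowerForm

variable {F : Type*} [Field F] {d : ℕ}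

theorem hasLowerForm_monomial (α : Fin d →₀ ℕ) : HasLowerForm (monomial α (1 : F)) α :=
  ⟨∅, 0, by simp, by simp⟩

theorem hasLowerForm_monomial_sub_monomial {α β : Fin d →₀ ℕ} (h : β < α) :
    HasLowerForm (monomial α 1 - monomial β (1 : F)) α :=
  ⟨{β}, fun _ => 1, by simpa using ⟨h.le, h.ne⟩, by simp⟩

theorem hasLowerForm_X_mul_X (i j : Fin d) :
    HasLowerForm (X i * X j : MvPolynomial (Fin d) F)
      (Finsupp.single i 1 + Finsupp.single j 1) := by
  simpa only [X, monomial_mul, mul_one] using hasLowerForm_monomial (F := F) _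

theorem hasLowerForm_X_pow_sub_X (i : Fin d) {n : ℕ} (hn : 1 < n) :
    HasLowerForm (X i ^ n - X i : MvPolynomial (Fin d) F) (Finsupp.single i n) := by
  rw [X_pow_eq_monomial]
  exact hasLowerForm_monomial_sub_monomial ((Finsupp.single_le_single.mpr hn.le).lt_of_ne
      ((Finsupp.single_injective i).ne hn.ne))

theorem hasLowerForm_X_mul_X_sub_X (i j : Fin d) :
    HasLowerForm (X i * X j - X i : MvPolynomial (Fin d) F)
      (Finsupp.single i 1 + Finsupp.single j 1) := by
  simpa only [X, monomial_mul, mul_one] using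
    hasLowerForm_monomial_sub_monomial (F := F)
      (lt_add_of_pos_right (Finsupp.single i 1) (by simp [pos_iff_ne_zero]))

end LowerForm

theorem stmt17_general {F : Type*} [Field F]
    (pts : Fin 4 → (Fin 3 → F))
    (hpts : pts = ![![0, 0, 0], ![0, 1, 0], ![0, 0, 1], ![1, 0, 1]])
    (gens : Set (MvPolynomial (Fin 3) F))
    (hgens : gens = {X 0 * X 1, X 1 * X 2, X 0 ^ 2 - X 0, X 1 ^ 2 - X 1,
      X 2 ^ 2 - X 2, X 0 * X 2 - X 0}) :
    (∀ f : MvPolynomial (Fin 3) F,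
      f ∈ Ideal.span gens ↔ ∀ k, eval (pts k) f = 0) ∧
    (∀ g ∈ gens, ∃ α : Fin 3 →₀ ℕ, HasLowerForm g α) := by
  subst hpts hgens
  refine ⟨fun f => ?_, ?_⟩
  · change f ∈ Ideal.span (exampleGens F) ↔ ∀ k, eval (exampleNodes F k) f = 0
    simp [span_exampleGens_eq_vanishingIdeal]
  · simp only [Set.forall_mem_insert, Set.mem_singleton_iff, forall_eq]
    exact ⟨⟨_, hasLowerForm_X_mul_X 0 1⟩, ⟨_, hasLowerForm_X_mul_X 1 2⟩,
      ⟨_, hasLowerForm_X_pow_sub_X 0 one_lt_two⟩, ⟨_, hasLowerForm_X_pow_sub_X 1 one_lt_two⟩,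
      ⟨_, hasLowerForm_X_pow_sub_X 2 one_lt_two⟩, ⟨_, hasLowerForm_X_mul_X_sub_X 0 2⟩⟩

/-- Example 3: the ideal of polynomials vanishing at the points
(0,0,0), (0,1,0), (0,0,1), (1,0,1) in F³ is generated by
{x₁x₂, x₂x₃, x₁²-x₁, x₂²-x₂, x₃²-x₃, x₁x₃-x₁}, and each generator has the form
x^α - Σ_{β<α} c_β x^β with β < α in the componentwise order. -/
theorem stmt17 {F : Type*} [Field F] [CharZero F]
    (pts : Fin 4 → (Fin 3 → F))
    (hpts : pts = ![![0, 0, 0], ![0, 1, 0], ![0, 0, 1], ![1, 0, 1]])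
    (gens : Set (MvPolynomial (Fin 3) F))
    (hgens : gens = {X 0 * X 1, X 1 * X 2, X 0 ^ 2 - X 0, X 1 ^ 2 - X 1,
      X 2 ^ 2 - X 2, X 0 * X 2 - X 0}) :
    (∀ f : MvPolynomial (Fin 3) F,
      f ∈ Ideal.span gens ↔ ∀ k, eval (pts k) f = 0) ∧
    (∀ g ∈ gens, ∃ α : Fin 3 →₀ ℕ, HasLowerForm g α) :=
  stmt17_general pts hpts gens hgens
end
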